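/- arXiv:1904.08473 — 2 statements merged into one kernel-verified Lean document; each statement's English description precedes it below -/
import Mathlib

section
/- Let M = (S, A, P, r, γ) be a finite MDP with γ ∈ (0,1), p0 an initial state distribution, and μ a behavior policy. Suppose a policy π is covered by μ, i.e., d^μ(s) > 0 for every s with d^π(s) > 0, and μ(a|s) > 0 for every (s,a) with d^π(s) > 0 and π(a|s) > 0 (in particular, any optimal policy π* satisfying the paper's Assumption 1). Then the normalized expected returns coincide: R_M^π = R_{M_μ}^π. -/
/-!
Every time-`t` term `d_t^π(s) π(a|s) P(s'|s,a)` of the original MDP that is nonzero has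
`d_t^π(s) > 0`, hence `d^π(s) > 0`, and likewise `d^π(s') > 0`; coverage then says exactly
that such a term passes the guards of the augmented kernel and reward. By induction on `t`
the time-`t` distributions of `π` in `M` and in `M_μ` therefore agree on `S`, and the
absorbing state, which carries no reward, does not contribute to the return.
-/

open scoped BigOperators
open Finset

noncomputable section

/-- One-step state-distribution update under policy `π` (here `π s a` denotes `π(a|s)`). -/
def nextDist {S A : Type} [Fintype S] [Fintype A]
    (P : S → A → S → ℝ) (π : S → A → ℝ) (d : S → ℝ) : S → ℝ :=
  fun s' => ∑ s, ∑ a, d s * π s a * P s a s'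

/-- The time-`t` state distribution `d_t^π`. -/
def stateDist {S A : Type} [Fintype S] [Fintype A]
    (P : S → A → S → ℝ) (π : S → A → ℝ) (p0 : S → ℝ) : ℕ → S → ℝ
  | 0 => p0
  | t + 1 => nextDist P π (stateDist P π p0 t)

/-- The discounted state distribution `d^π`. -/
def discDist {S A : Type} [Fintype S] [Fintype A]
    (γ : ℝ) (P : S → A → S → ℝ) (π : S → A → ℝ) (p0 : S → ℝ) : S → ℝ :=
  fun s => (1 - γ) * ∑' t : ℕ, γ ^ t * stateDist P π p0 t s

/-- The normalized expected return `R^π_M`. -/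
def expReturn {S A : Type} [Fintype S] [Fintype A]
    (γ : ℝ) (P : S → A → S → ℝ) (r : S → A → ℝ) (π : S → A → ℝ) (p0 : S → ℝ) : ℝ :=
  (1 - γ) * ∑' t : ℕ, γ ^ t * ∑ s, ∑ a, stateDist P π p0 t s * π s a * r s a

/-- Transition kernel of the augmented MDP `M_μ` on `Option S`, where `none` plays the
role of the absorbing state `s_abs` and `dμ` is the discounted state distribution of
the behavior policy `μ`.  States `some s` with `dμ s = 0` are given no incoming mass,
so the reachable state space is exactly `S_μ ∪ {s_abs}`. -/
def augP {S A : Type} [Fintype S] [Fintype A]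
    (P : S → A → S → ℝ) (dμ : S → ℝ) (μ : S → A → ℝ) : Option S → A → Option S → ℝ
  | none, _, none => 1
  | none, _, some _ => 0
  | some s, a, some s' => if 0 < dμ s * μ s a ∧ 0 < dμ s' then P s a s' else 0
  | some s, a, none =>
      if 0 < dμ s * μ s a then ∑ s' ∈ Finset.univ.filter (fun s' => ¬ 0 < dμ s'), P s a s'
      else 1

/-- Reward function of the augmented MDP `M_μ`. -/
def augR {S A : Type} (r : S → A → ℝ) (dμ : S → ℝ) (μ : S → A → ℝ) : Option S → A → ℝ
  | none, _ => 0
  | some s, a => if 0 < dμ s * μ s a then r s a else 0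

/-- Initial state distribution of the augmented MDP `M_μ`. -/
def augp0 {S : Type} (p0 : S → ℝ) : Option S → ℝ
  | none => 0
  | some s => p0 s

section StateDist

variable {S A : Type} [Fintype S] [Fintype A] {P : S → A → S → ℝ} {π : S → A → ℝ}

theorem sum_nextDist (hP1 : ∀ s a, ∑ s', P s a s' = 1) (hπ1 : ∀ s, ∑ a, π s a = 1)
    (d : S → ℝ) : ∑ s', nextDist P π d s' = ∑ s, d s := by
  unfold nextDist
  rw [Finset.sum_comm]
  refine Finset.sum_congr rfl fun s _ => ?_
  rw [Finset.sum_comm]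
  simp only [← Finset.mul_sum, hP1, mul_one, hπ1]

theorem mul_le_nextDist (hP0 : ∀ s a s', 0 ≤ P s a s') (hπ0 : ∀ s a, 0 ≤ π s a)
    {d : S → ℝ} (hd : ∀ s, 0 ≤ d s) (s : S) (a : A) (s' : S) :
    d s * π s a * P s a s' ≤ nextDist P π d s' := by
  have hterm : ∀ s a, 0 ≤ d s * π s a * P s a s' := fun s a =>
    mul_nonneg (mul_nonneg (hd s) (hπ0 s a)) (hP0 s a s')
  calc d s * π s a * P s a s' ≤ ∑ a, d s * π s a * P s a s' :=
        Finset.single_le_sum (fun a _ => hterm s a) (Finset.mem_univ a)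
    _ ≤ nextDist P π d s' :=
        Finset.single_le_sum (f := fun s => ∑ a, d s * π s a * P s a s')
          (fun s _ => Finset.sum_nonneg fun a _ => hterm s a) (Finset.mem_univ s)

variable {p0 : S → ℝ}

theorem stateDist_nonneg (hP0 : ∀ s a s', 0 ≤ P s a s') (hπ0 : ∀ s a, 0 ≤ π s a)
    (hp00 : ∀ s, 0 ≤ p0 s) (t : ℕ) (s : S) : 0 ≤ stateDist P π p0 t s := by
  induction t generalizing s with
  | zero => exact hp00 s
  | succ t ih =>
    exact Finset.sum_nonneg fun s _ => Finset.sum_nonneg fun a _ =>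
      mul_nonneg (mul_nonneg (ih s) (hπ0 s a)) (hP0 s a _)

theorem sum_stateDist (hP1 : ∀ s a, ∑ s', P s a s' = 1) (hπ1 : ∀ s, ∑ a, π s a = 1)
    (t : ℕ) : ∑ s, stateDist P π p0 t s = ∑ s, p0 s := by
  induction t with
  | zero => rfl
  | succ t ih => exact (sum_nextDist hP1 hπ1 _).trans ih

theorem summable_discounted_stateDist {γ : ℝ} (hγ0 : 0 ≤ γ) (hγ1 : γ < 1)
    (hP0 : ∀ s a s', 0 ≤ P s a s') (hP1 : ∀ s a, ∑ s', P s a s' = 1)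
    (hπ0 : ∀ s a, 0 ≤ π s a) (hπ1 : ∀ s, ∑ a, π s a = 1) (hp00 : ∀ s, 0 ≤ p0 s) (s : S) :
    Summable fun t => γ ^ t * stateDist P π p0 t s := by
  have hnonneg := stateDist_nonneg hP0 hπ0 hp00
  have hbound (t : ℕ) : stateDist P π p0 t s ≤ ∑ s, p0 s :=
    sum_stateDist (p0 := p0) hP1 hπ1 t ▸
      Finset.single_le_sum (fun s _ => hnonneg t s) (Finset.mem_univ s)
  refine Summable.of_nonneg_of_le (fun t => mul_nonneg (pow_nonneg hγ0 t) (hnonneg t s))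
    (fun t => ?_) ((summable_geometric_of_lt_one hγ0 hγ1).mul_right (∑ s, p0 s))
  exact mul_le_mul_of_nonneg_left (hbound t) (pow_nonneg hγ0 t)

theorem discDist_pos_of_stateDist_pos {γ : ℝ} (hγ0 : 0 < γ) (hγ1 : γ < 1)
    (hP0 : ∀ s a s', 0 ≤ P s a s') (hP1 : ∀ s a, ∑ s', P s a s' = 1)
    (hπ0 : ∀ s a, 0 ≤ π s a) (hπ1 : ∀ s, ∑ a, π s a = 1) (hp00 : ∀ s, 0 ≤ p0 s)
    {t : ℕ} {s : S} (h : 0 < stateDist P π p0 t s) : 0 < discDist γ P π p0 s :=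
  mul_pos (sub_pos.2 hγ1) <|
    (summable_discounted_stateDist hγ0.le hγ1 hP0 hP1 hπ0 hπ1 hp00 s).tsum_pos
      (fun t => mul_nonneg (pow_nonneg hγ0.le t) (stateDist_nonneg hP0 hπ0 hp00 t s)) t
      (mul_pos (pow_pos hγ0 t) h)

end StateDist

theorem mul_ite_zero_eq_of_mul_ne_zero {R : Type*} [MulZeroClass R] {x y : R} {c : Prop}
    [Decidable c] (h : x * y ≠ 0 → c) : x * (if c then y else 0) = x * y := by
  by_cases hc : c
  · rw [if_pos hc]
  · rw [if_neg hc, mul_zero, not_not.1 (mt h hc)]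

section Augmented

variable {S A : Type} [Fintype S] [Fintype A] {P : S → A → S → ℝ} {π : S → A → ℝ}
  {p0 : S → ℝ} {dμ : S → ℝ} {μ : S → A → ℝ} {πa : Option S → A → ℝ}

theorem stateDist_augP_some (hagree : ∀ s a, πa (some s) a = π s a)
    (hstep : ∀ t s a s', stateDist P π p0 t s * π s a * P s a s' ≠ 0 →
      0 < dμ s * μ s a ∧ 0 < dμ s')
    (t : ℕ) (s : S) :
    stateDist (augP P dμ μ) πa (augp0 p0) t (some s) = stateDist P π p0 t s := by
  induction t generalizing s with
  | zero => rfl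
  | succ t ih =>
    simp only [stateDist, nextDist, Fintype.sum_option, augP, mul_zero, Finset.sum_const_zero,
      zero_add, ih, hagree]
    exact Finset.sum_congr rfl fun s' _ => Finset.sum_congr rfl fun a _ =>
      mul_ite_zero_eq_of_mul_ne_zero (hstep t s' a s)

theorem expReturn_augment_eq (γ : ℝ) (r : S → A → ℝ) (hagree : ∀ s a, πa (some s) a = π s a)
    (hstep : ∀ t s a s', stateDist P π p0 t s * π s a * P s a s' ≠ 0 →
      0 < dμ s * μ s a ∧ 0 < dμ s')
    (hact : ∀ t s a, stateDist P π p0 t s * π s a ≠ 0 → 0 < dμ s * μ s a) :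
    expReturn γ (augP P dμ μ) (augR r dμ μ) πa (augp0 p0) = expReturn γ P r π p0 := by
  simp only [expReturn, Fintype.sum_option, augR, mul_zero, Finset.sum_const_zero, zero_add,
    stateDist_augP_some hagree hstep, hagree]
  congr! 3 with t
  refine congrArg _ <| Finset.sum_congr rfl fun s _ => Finset.sum_congr rfl fun a _ =>
    mul_ite_zero_eq_of_mul_ne_zero fun h => hact t s a (left_ne_zero_of_mul h)

end Augmented

theorem augmented_return_eq_of_covered_general {S A : Type} [Fintype S] [Fintype A]
    (γ : ℝ) (hγ0 : 0 < γ) (hγ1 : γ < 1)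
    (P : S → A → S → ℝ) (hP0 : ∀ s a s', 0 ≤ P s a s') (hP1 : ∀ s a, ∑ s', P s a s' = 1)
    (r : S → A → ℝ)
    (p0 : S → ℝ) (hp00 : ∀ s, 0 ≤ p0 s)
    (μ : S → A → ℝ)
    (π : S → A → ℝ) (hπ0 : ∀ s a, 0 ≤ π s a) (hπ1 : ∀ s, ∑ a, π s a = 1)
    (hcovS : ∀ s, 0 < discDist γ P π p0 s → 0 < discDist γ P μ p0 s)
    (hcovA : ∀ s a, 0 < discDist γ P π p0 s → 0 < π s a → 0 < μ s a)
    (πa : Option S → A → ℝ)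
    (hagree : ∀ s a, πa (some s) a = π s a) :
    expReturn γ (augP P (discDist γ P μ p0) μ) (augR r (discDist γ P μ p0) μ) πa (augp0 p0)
      = expReturn γ P r π p0 := by
  have hd := stateDist_nonneg hP0 hπ0 hp00
  have hdisc {t s} (h : stateDist P π p0 t s ≠ 0) : 0 < discDist γ P π p0 s :=
    discDist_pos_of_stateDist_pos hγ0 hγ1 hP0 hP1 hπ0 hπ1 hp00 ((hd t s).lt_of_ne' h)
  have hact (t s a) (h : stateDist P π p0 t s * π s a ≠ 0) :
      0 < discDist γ P μ p0 s * μ s a :=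
    mul_pos (hcovS s (hdisc (left_ne_zero_of_mul h)))
      (hcovA s a (hdisc (left_ne_zero_of_mul h)) ((hπ0 s a).lt_of_ne' (right_ne_zero_of_mul h)))
  have hstep (t s a s') (h : stateDist P π p0 t s * π s a * P s a s' ≠ 0) :
      0 < discDist γ P μ p0 s * μ s a ∧ 0 < discDist γ P μ p0 s' := by
    have hnext : stateDist P π p0 (t + 1) s' ≠ 0 :=
      ((mul_nonneg (mul_nonneg (hd t s) (hπ0 s a)) (hP0 s a s')).lt_of_ne' h
        |>.trans_le (mul_le_nextDist hP0 hπ0 (hd t) s a s')).ne'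
    exact ⟨hact t s a (left_ne_zero_of_mul h), hcovS s' (hdisc hnext)⟩
  exact expReturn_augment_eq γ r hagree hstep hact

/-- If a policy `π` is covered by the behavior policy `μ`
(`d^μ(s) > 0` whenever `d^π(s) > 0`, and `μ(a|s) > 0` whenever `d^π(s) > 0` and
`π(a|s) > 0`), then the normalized expected return of `π` in the original MDP `M`
coincides with its normalized expected return in the augmented MDP `M_μ`. -/
theorem augmented_return_eq_of_covered {S A : Type} [Fintype S] [Fintype A]
    (γ : ℝ) (hγ0 : 0 < γ) (hγ1 : γ < 1)
    (P : S → A → S → ℝ) (hP0 : ∀ s a s', 0 ≤ P s a s') (hP1 : ∀ s a, ∑ s', P s a s' = 1)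
    (r : S → A → ℝ) (hr0 : ∀ s a, 0 ≤ r s a) (hr1 : ∀ s a, r s a ≤ 1)
    (p0 : S → ℝ) (hp00 : ∀ s, 0 ≤ p0 s) (hp01 : ∑ s, p0 s = 1)
    (μ : S → A → ℝ) (hμ0 : ∀ s a, 0 ≤ μ s a) (hμ1 : ∀ s, ∑ a, μ s a = 1)
    (π : S → A → ℝ) (hπ0 : ∀ s a, 0 ≤ π s a) (hπ1 : ∀ s, ∑ a, π s a = 1)
    (hcovS : ∀ s, 0 < discDist γ P π p0 s → 0 < discDist γ P μ p0 s)
    (hcovA : ∀ s a, 0 < discDist γ P π p0 s → 0 < π s a → 0 < μ s a)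
    (πa : Option S → A → ℝ) (hπa0 : ∀ s a, 0 ≤ πa s a) (hπa1 : ∀ s, ∑ a, πa s a = 1)
    (hagree : ∀ s a, πa (some s) a = π s a) :
    expReturn γ (augP P (discDist γ P μ p0) μ) (augR r (discDist γ P μ p0) μ) πa (augp0 p0)
      = expReturn γ P r π p0 :=
  augmented_return_eq_of_covered_general γ hγ0 hγ1 P hP0 hP1 r p0 hp00 μ π hπ0 hπ1 hcovS hcovA πa
    hagree
end
end

section
/- Let f : ℝ^d → ℝ be differentiable with L-Lipschitz gradient (L > 0) and bounded below. Consider iterates X_{k+1} = X_k − (1/L)(∇f(X_k) + D_k) with ‖E[D_k | F_k]‖ ≤ B_k and E[‖D_k‖² | F_k] ≤ 2(σ_k² + B_k²) almost surely, where F_k = σ(X_1, …, X_k). If the oracle errors vanish in Cesàro mean, i.e., lim_{K→∞} (1/K) Σ_{k=1}^K (σ_k² + B_k²) = 0, then lim_{K→∞} (1/K) Σ_{k=1}^K E[‖∇f(X_k)‖²] = 0. -/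
/-! For an `L`-smooth `f`, the descent lemma turns one step of size `1/L` into the pointwise bound
`‖∇f(X k)‖² ≤ 2L (f(X k) - f(X (k+1))) + ‖D k‖²`. Taking expectations, bounding `E‖D k‖²` by
`2(σ k² + B k²)` through its conditional expectation, and telescoping against a lower bound `m`
of `f` gives `Σ_{k ≤ K} E‖∇f(X k)‖² ≤ 2L (E f(X 1) - m) + 2 Σ_{k ≤ K} (σ k² + B k²)`; dividing
by `K` yields the claim. The same pointwise bound propagates integrability of `f(X k)` along the
recursion. -/

open MeasureTheory Filter RealInnerProductSpace

section Descent

variable {E : Type*} [NormedAddCommGroup E] [InnerProductSpace ℝ E] [CompleteSpace E]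
  {f : E → ℝ} {L : ℝ}

theorem Differentiable.le_add_inner_gradient_add_sq (hf : Differentiable ℝ f)
    (hlip : ∀ x y, ‖gradient f x - gradient f y‖ ≤ L * ‖x - y‖) (x v : E) :
    f (x + v) ≤ f x + ⟪gradient f x, v⟫ + L / 2 * ‖v‖ ^ 2 := by
  set φ : ℝ → ℝ := fun t => f (x + t • v) - t * ⟪gradient f x, v⟫ - L / 2 * t ^ 2 * ‖v‖ ^ 2
  have hφ : ∀ t, HasDerivAt φ
      (⟪gradient f (x + t • v) - gradient f x, v⟫ - L * t * ‖v‖ ^ 2) t := by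
    intro t
    have hline : HasDerivAt (fun s : ℝ => x + s • v) v t := by
      simpa using ((hasDerivAt_id t).smul_const v).const_add x
    have hfline := (hf (x + t • v)).hasFDerivAt.comp_hasDerivAt t hline
    rw [← inner_gradient_left] at hfline
    refine ((hfline.sub ((hasDerivAt_id t).mul_const ⟪gradient f x, v⟫)).sub
      (((hasDerivAt_pow 2 t).const_mul (L / 2)).mul_const (‖v‖ ^ 2))).congr_deriv ?_
    rw [inner_sub_left]
    simp only [one_mul]
    ring
  have hφ_anti : AntitoneOn φ (Set.Icc 0 1) := by
    refine antitoneOn_of_deriv_nonpos (convex_Icc 0 1)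
      (fun t _ => (hφ t).continuousAt.continuousWithinAt)
      (fun t _ => (hφ t).differentiableAt.differentiableWithinAt) fun t ht => ?_
    rw [interior_Icc] at ht
    rw [(hφ t).deriv, sub_nonpos]
    calc ⟪gradient f (x + t • v) - gradient f x, v⟫
        ≤ ‖gradient f (x + t • v) - gradient f x‖ * ‖v‖ := real_inner_le_norm _ _
      _ ≤ L * ‖x + t • v - x‖ * ‖v‖ := by gcongr; exact hlip _ _
      _ = L * t * ‖v‖ ^ 2 := by
        rw [add_sub_cancel_left, norm_smul, Real.norm_of_nonneg ht.1.le]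
        ring
  have h01 : φ 1 ≤ φ 0 := hφ_anti (by norm_num) (by norm_num) zero_le_one
  simp only [φ, one_smul, zero_smul, add_zero, one_pow, one_mul, zero_mul, sub_zero,
    ne_eq, OfNat.ofNat_ne_zero, not_false_eq_true, zero_pow, mul_zero] at h01
  linarith

theorem Differentiable.sq_norm_gradient_le_of_step (hf : Differentiable ℝ f) (hL : 0 < L)
    (hlip : ∀ x y, ‖gradient f x - gradient f y‖ ≤ L * ‖x - y‖) (x e : E) :
    ‖gradient f x‖ ^ 2 ≤ 2 * L * (f x - f (x - (1 / L) • (gradient f x + e))) + ‖e‖ ^ 2 := by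
  have h := hf.le_add_inner_gradient_add_sq hlip x (-((1 / L) • (gradient f x + e)))
  rw [← sub_eq_add_neg, inner_neg_right, norm_neg, inner_smul_right, norm_smul, mul_pow,
    inner_add_right, real_inner_self_eq_norm_sq, norm_add_sq_real,
    Real.norm_of_nonneg (by positivity)] at h
  field_simp at h
  linarith

end Descent

section OneStep

variable {Ω : Type*} [MeasurableSpace Ω] {μ : Measure Ω} {u u' g s : Ω → ℝ} {C m : ℝ}

theorem integral_le_mul_sub_add (hstep : ∀ ω, g ω ≤ C * (u ω - u' ω) + s ω)
    (hg : Integrable g μ) (hu : Integrable u μ) (hu' : Integrable u' μ) (hs : Integrable s μ) :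
    ∫ ω, g ω ∂μ ≤ C * (∫ ω, u ω ∂μ - ∫ ω, u' ω ∂μ) + ∫ ω, s ω ∂μ := by
  have hdiff : Integrable (fun ω => C * (u ω - u' ω)) μ := (hu.sub hu').const_mul C
  calc ∫ ω, g ω ∂μ ≤ ∫ ω, C * (u ω - u' ω) + s ω ∂μ := integral_mono hg (hdiff.add hs) hstep
    _ = _ := by rw [integral_add hdiff hs, integral_const_mul, integral_sub hu hu']

variable [IsFiniteMeasure μ]

theorem integrable_right_of_le_mul_sub_add (hC : 0 < C) (hm : ∀ ω, m ≤ u' ω)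
    (hg : ∀ ω, 0 ≤ g ω) (hstep : ∀ ω, g ω ≤ C * (u ω - u' ω) + s ω)
    (hu : Integrable u μ) (hs : Integrable s μ) (hu' : AEStronglyMeasurable u' μ) :
    Integrable u' μ := by
  refine integrable_of_le_of_le hu' (.of_forall hm) (.of_forall fun ω => ?_)
    (integrable_const m) (hu.add (hs.const_mul C⁻¹))
  have : u' ω - u ω ≤ C⁻¹ * s ω := by
    rw [le_inv_mul_iff₀ hC]
    linarith [hstep ω, hg ω]
  exact show u' ω ≤ u ω + C⁻¹ * s ω by linarith

theorem integrable_of_le_mul_sub_add (hC : 0 ≤ C) (hm : ∀ ω, m ≤ u' ω)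
    (hg : ∀ ω, 0 ≤ g ω) (hstep : ∀ ω, g ω ≤ C * (u ω - u' ω) + s ω)
    (hu : Integrable u μ) (hs : Integrable s μ) (hg' : AEStronglyMeasurable g μ) :
    Integrable g μ :=
  integrable_of_le_of_le hg' (.of_forall hg)
    (.of_forall fun ω => show g ω ≤ C * (u ω - m) + s ω from
      (hstep ω).trans (by gcongr; exact hm ω)) (integrable_const 0)
    (((hu.sub (integrable_const m)).const_mul C).add hs)

end OneStep

theorem integral_le_of_ae_condExp_le {Ω : Type*} {m m₀ : MeasurableSpace Ω} {μ : Measure Ω}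
    [IsProbabilityMeasure μ] {f : Ω → ℝ} {c : ℝ} (hm : m ≤ m₀) (hf : ∀ᵐ ω ∂μ, μ[f|m] ω ≤ c) :
    ∫ ω, f ω ∂μ ≤ c := by
  rw [← integral_condExp hm]
  simpa using integral_mono_ae integrable_condExp (integrable_const c) hf

section Cesaro

variable {g a e : ℕ → ℝ} {C m : ℝ}

theorem sum_Icc_le_mul_sub_add (hstep : ∀ k, 1 ≤ k → g k ≤ C * (a k - a (k + 1)) + e k)
    (K : ℕ) :
    ∑ k ∈ Finset.Icc 1 K, g k ≤ C * (a 1 - a (K + 1)) + ∑ k ∈ Finset.Icc 1 K, e k := by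
  induction K with
  | zero => simp
  | succ K ih =>
    rw [Finset.sum_Icc_succ_top (by omega), Finset.sum_Icc_succ_top (by omega)]
    linarith [hstep (K + 1) (by omega)]

theorem tendsto_cesaro_zero_of_le_mul_sub_add (hC : 0 ≤ C) (hg : ∀ k, 0 ≤ g k)
    (ha : ∀ k, 1 ≤ k → m ≤ a k) (hstep : ∀ k, 1 ≤ k → g k ≤ C * (a k - a (k + 1)) + e k)
    (he : Tendsto (fun K : ℕ => (1 / (K : ℝ)) * ∑ k ∈ Finset.Icc 1 K, e k) atTop (nhds 0)) :
    Tendsto (fun K : ℕ => (1 / (K : ℝ)) * ∑ k ∈ Finset.Icc 1 K, g k) atTop (nhds 0) := by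
  have hbound : Tendsto (fun K : ℕ => C * (a 1 - m) * (1 / (K : ℝ))
      + (1 / (K : ℝ)) * ∑ k ∈ Finset.Icc 1 K, e k) atTop (nhds 0) := by
    simpa using (tendsto_one_div_atTop_nhds_zero_nat.const_mul (C * (a 1 - m))).add he
  refine squeeze_zero (fun K => mul_nonneg (by positivity) (Finset.sum_nonneg fun k _ => hg k))
    (fun K => ?_) hbound
  have hsum : ∑ k ∈ Finset.Icc 1 K, g k ≤ C * (a 1 - m) + ∑ k ∈ Finset.Icc 1 K, e k := by
    linarith [sum_Icc_le_mul_sub_add hstep K,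
      mul_le_mul_of_nonneg_left (ha (K + 1) (by omega)) hC]
  calc (1 / (K : ℝ)) * ∑ k ∈ Finset.Icc 1 K, g k
      ≤ (1 / (K : ℝ)) * (C * (a 1 - m) + ∑ k ∈ Finset.Icc 1 K, e k) := by gcongr
    _ = _ := by ring

end Cesaro

theorem sgd_biased_oracle_stationarity_general {d : ℕ} {Ω : Type} [MeasurableSpace Ω]
    (ℙ : Measure Ω) [IsProbabilityMeasure ℙ]
    (f : EuclideanSpace ℝ (Fin d) → ℝ) (L : ℝ) (hL : 0 < L)
    (hf : Differentiable ℝ f)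
    (hlip : ∀ x y, ‖gradient f x - gradient f y‖ ≤ L * ‖x - y‖)
    (hbdd : BddBelow (Set.range f))
    (X D : ℕ → Ω → EuclideanSpace ℝ (Fin d))
    (hXmeas : ∀ k, Measurable (X k))
    (hX1int : Integrable (fun ω => f (X 1 ω)) ℙ)
    (hrec : ∀ k, 1 ≤ k →
      X (k + 1) = fun ω => X k ω - (1 / L) • (gradient f (X k ω) + D k ω))
    (B σ' : ℕ → ℝ)
    (F : ℕ → MeasurableSpace Ω)
    (hF : ∀ k, F k = ⨆ i ∈ Finset.Icc 1 k, MeasurableSpace.comap (X i) inferInstance)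
    (hDsq : ∀ k, Integrable (fun ω => ‖D k ω‖ ^ 2) ℙ)
    (hvar : ∀ k, 1 ≤ k → ∀ᵐ ω ∂ℙ,
      (ℙ[(fun ω' => ‖D k ω'‖ ^ 2) | F k]) ω ≤ 2 * (σ' k ^ 2 + B k ^ 2))
    (hcesaro : Tendsto
      (fun K : ℕ => (1 / (K : ℝ)) * ∑ k ∈ Finset.Icc 1 K, (σ' k ^ 2 + B k ^ 2))
      atTop (nhds 0)) :
    Tendsto
      (fun K : ℕ => (1 / (K : ℝ)) * ∑ k ∈ Finset.Icc 1 K, ∫ ω, ‖gradient f (X k ω)‖ ^ 2 ∂ℙ)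
      atTop (nhds 0) := by
  obtain ⟨m, hm⟩ := hbdd
  have hgrad : Continuous (gradient f) :=
    (LipschitzWith.of_dist_le' (K := L) fun x y => by
      simpa only [dist_eq_norm] using hlip x y).continuous
  have hdesc : ∀ k, 1 ≤ k → ∀ ω, ‖gradient f (X k ω)‖ ^ 2 ≤
      2 * L * (f (X k ω) - f (X (k + 1) ω)) + ‖D k ω‖ ^ 2 := fun k hk ω => by
    rw [hrec k hk]
    exact hf.sq_norm_gradient_le_of_step hL hlip _ _
  have hfX : ∀ k, 1 ≤ k → Integrable (fun ω => f (X k ω)) ℙ :=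
    Nat.le_induction hX1int fun k hk ih =>
      integrable_right_of_le_mul_sub_add (by positivity) (fun ω => hm ⟨_, rfl⟩)
        (fun ω => sq_nonneg _) (hdesc k hk) ih (hDsq k)
        (hf.continuous.measurable.comp (hXmeas _)).aestronglyMeasurable
  have hgX : ∀ k, 1 ≤ k → Integrable (fun ω => ‖gradient f (X k ω)‖ ^ 2) ℙ := fun k hk =>
    integrable_of_le_mul_sub_add (by positivity) (fun ω => hm ⟨_, rfl⟩)
      (fun ω => sq_nonneg _) (hdesc k hk) (hfX k hk) (hDsq k)
      ((hgrad.norm.pow 2).measurable.comp (hXmeas k)).aestronglyMeasurable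
  have hDX : ∀ k, 1 ≤ k → ∫ ω, ‖D k ω‖ ^ 2 ∂ℙ ≤ 2 * (σ' k ^ 2 + B k ^ 2) := fun k hk =>
    integral_le_of_ae_condExp_le ((hF k).le.trans (iSup₂_le fun i _ => (hXmeas i).comap_le))
      (hvar k hk)
  refine tendsto_cesaro_zero_of_le_mul_sub_add (C := 2 * L) (m := m)
    (a := fun k => ∫ ω, f (X k ω) ∂ℙ) (e := fun k => 2 * (σ' k ^ 2 + B k ^ 2)) (by positivity)
    (fun k => integral_nonneg fun ω => sq_nonneg _) (fun k hk => ?_) (fun k hk => ?_) ?_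
  · simpa using integral_mono (integrable_const m) (hfX k hk) fun ω => hm ⟨_, rfl⟩
  · exact (integral_le_mul_sub_add (hdesc k hk) (hgX k hk) (hfX k hk) (hfX (k + 1) (by omega))
      (hDsq k)).trans (by linarith [hDX k hk])
  · simpa [Finset.mul_sum, mul_left_comm] using hcesaro.const_mul 2

/-- Stochastic gradient descent with step size `1/L` and a biased noisy
gradient oracle whose errors vanish in Cesàro mean converges to a stationary point in
average-squared-gradient-norm:
if `lim_{K→∞} (1/K) Σ_{k=1}^K (σ k² + B k²) = 0` then
`lim_{K→∞} (1/K) Σ_{k=1}^K E‖∇f(X k)‖² = 0`. -/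
theorem sgd_biased_oracle_stationarity {d : ℕ} {Ω : Type} [MeasurableSpace Ω]
    (ℙ : Measure Ω) [IsProbabilityMeasure ℙ]
    (f : EuclideanSpace ℝ (Fin d) → ℝ) (L : ℝ) (hL : 0 < L)
    (hf : Differentiable ℝ f)
    (hlip : ∀ x y, ‖gradient f x - gradient f y‖ ≤ L * ‖x - y‖)
    (hbdd : BddBelow (Set.range f))
    (X D : ℕ → Ω → EuclideanSpace ℝ (Fin d))
    (hXmeas : ∀ k, Measurable (X k)) (hDmeas : ∀ k, Measurable (D k))
    (hX1int : Integrable (fun ω => f (X 1 ω)) ℙ)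
    (hrec : ∀ k, 1 ≤ k →
      X (k + 1) = fun ω => X k ω - (1 / L) • (gradient f (X k ω) + D k ω))
    (B σ' : ℕ → ℝ) (hB : ∀ k, 0 ≤ B k) (hσ : ∀ k, 0 ≤ σ' k)
    (F : ℕ → MeasurableSpace Ω)
    (hF : ∀ k, F k = ⨆ i ∈ Finset.Icc 1 k, MeasurableSpace.comap (X i) inferInstance)
    (hDint : ∀ k, Integrable (D k) ℙ)
    (hDsq : ∀ k, Integrable (fun ω => ‖D k ω‖ ^ 2) ℙ)
    (hbias : ∀ k, 1 ≤ k → ∀ᵐ ω ∂ℙ, ‖(ℙ[D k | F k]) ω‖ ≤ B k)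
    (hvar : ∀ k, 1 ≤ k → ∀ᵐ ω ∂ℙ,
      (ℙ[(fun ω' => ‖D k ω'‖ ^ 2) | F k]) ω ≤ 2 * (σ' k ^ 2 + B k ^ 2))
    (hcesaro : Tendsto
      (fun K : ℕ => (1 / (K : ℝ)) * ∑ k ∈ Finset.Icc 1 K, (σ' k ^ 2 + B k ^ 2))
      atTop (nhds 0)) :
    Tendsto
      (fun K : ℕ => (1 / (K : ℝ)) * ∑ k ∈ Finset.Icc 1 K, ∫ ω, ‖gradient f (X k ω)‖ ^ 2 ∂ℙ)
      atTop (nhds 0) :=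
  sgd_biased_oracle_stationarity_general ℙ f L hL hf hlip hbdd X D hXmeas hX1int hrec B σ' F hF hDsq
    hvar hcesaro
end
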